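/- Let f(x,y) = √(αβ) with α = Σ_{i=1}^n x_i², β = Σ_{i=1}^k x_i² + Σ_{i=k+1}^n y_i², and let v₀ = Σ_i (α y_i δ_{i>k} ∂/∂x_i + (β − α δ_{i≤k}) x_i ∂/∂y_i). Then outside L₁ ∪ L₂, v₀ is an eigenvector of the real symmetric matrix M₀ representing dd^c f(·, i·) with eigenvalue (2 Σ_{i≤k} x_i²)/√(αβ). -/

import Mathlib

noncomputable section

/-- ℂⁿ as a real inner product space. -/
abbrev Cn (n : ℕ) := EuclideanSpace ℂ (Fin n)

/-- α(x,y) = Σ xᵢ², the squared distance to L₁ = iℝⁿ. -/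
def alph (n : ℕ) (z : Cn n) : ℝ := ∑ i, (z i).re ^ 2

/-- β(x,y) = Σ_{i≤k} xᵢ² + Σ_{i>k} yᵢ² (0-based: i < k resp. k ≤ i). -/
def bet (n k : ℕ) (z : Cn n) : ℝ :=
  ∑ i : Fin n, if (i : ℕ) < k then (z i).re ^ 2 else (z i).im ^ 2

/-- The Levi quadratic form of a real function `f` at `z` on the (real) vector `v`:
`dd^c f(v, iv) = Hess f(v,v) + Hess f(iv,iv)`.  Weak plurisubharmonicity of `f` at `z`
(positive semidefiniteness of the complex Hessian `(∂²f/∂zᵢ∂z̄ⱼ)`) is equivalent to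
`0 ≤ levi n f z v` for all `v`. -/
def levi (n : ℕ) (f : Cn n → ℝ) (z v : Cn n) : ℝ :=
  iteratedFDeriv ℝ 2 f z ![v, v] + iteratedFDeriv ℝ 2 f z ![Complex.I • v, Complex.I • v]

/-- The symmetric bilinear form `dd^c f(·, i·)(v,w) = Hess f(v,w) + Hess f(iv,iw)`,
whose matrix in the standard real basis of ℝ²ⁿ is `M₀`. -/
def leviB (n : ℕ) (f : Cn n → ℝ) (z v w : Cn n) : ℝ :=
  iteratedFDeriv ℝ 2 f z ![v, w] + iteratedFDeriv ℝ 2 f z ![Complex.I • v, Complex.I • w]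
/-- Σ_{i ≤ k} xᵢ² (0-based: i < k). -/
def sxk (n k : ℕ) (z : Cn n) : ℝ := ∑ i : Fin n, if (i : ℕ) < k then (z i).re ^ 2 else 0

/-- v₀ = Σᵢ (α yᵢ δ_{i>k} ∂/∂xᵢ + (β − α δ_{i≤k}) xᵢ ∂/∂yᵢ), as a vector of ℂⁿ = ℝ²ⁿ. -/
def v0 (n k : ℕ) (z : Cn n) : Cn n :=
  (EuclideanSpace.equiv (Fin n) ℂ).symm fun i =>
    ((if k ≤ (i : ℕ) then alph n z * (z i).im else 0 : ℝ) : ℂ) +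
      (((bet n k z - if (i : ℕ) < k then alph n z else 0) * (z i).re : ℝ) : ℂ) * Complex.I

/-- v₁ = Σᵢ (α yᵢ δ_{i>k} ∂/∂xᵢ − (β + α δ_{i≤k}) xᵢ ∂/∂yᵢ). -/
def v1 (n k : ℕ) (z : Cn n) : Cn n :=
  (EuclideanSpace.equiv (Fin n) ℂ).symm fun i =>
    ((if k ≤ (i : ℕ) then alph n z * (z i).im else 0 : ℝ) : ℂ) -
      (((bet n k z + if (i : ℕ) < k then alph n z else 0) * (z i).re : ℝ) : ℂ) * Complex.I

open scoped RealInnerProductSpace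

/-!
Write α = A(q,q), β = B(q,q) for the symmetric forms A = Σ xᵢ², B = Σ_{i≤k} xᵢ² + Σ_{i>k} yᵢ².
The Hessian of √(αβ) at z is (αB + βA − m ⊗ m / (αβ)) / √(αβ) with m = α B(z,·) − β A(z,·).
Both A and B become the Euclidean inner product after adding their conjugates by J = i·, and
m = ⟪J v₀, ·⟫.  Hence m(v₀) = 0, m(J v₀) = ‖v₀‖² and m(J w) = ⟪v₀, w⟫, so that
dd^c √(αβ)(v₀, J w) = (α + β − ‖v₀‖² / (αβ)) / √(αβ) · ⟪v₀, w⟫, and the eigenvalue comes out of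
‖v₀‖² = αβ (α + β − 2 Σ_{i≤k} xᵢ²).
-/

section SqrtOfProductOfQuadraticForms

variable {E : Type*} [NormedAddCommGroup E] [NormedSpace ℝ E] {A B : E →L[ℝ] E →L[ℝ] ℝ}

theorem hasFDerivAt_apply_self (hA : ∀ u w, A u w = A w u) (x : E) :
    HasFDerivAt (fun y => A y y) ((2 : ℝ) • A x) x := by
  refine (A.hasFDerivAt.clm_apply (hasFDerivAt_id x)).congr_fderiv ?_
  ext u
  simp [hA u x, two_mul]

theorem hasFDerivAt_sqrt_mul_apply_self (hA : ∀ u w, A u w = A w u)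
    (hB : ∀ u w, B u w = B w u) {x : E} (hx : 0 < A x x * B x x) :
    HasFDerivAt (fun y => √(A y y * B y y))
      ((√(A x x * B x x))⁻¹ • (A x x • B x + B x x • A x)) x := by
  have hg := (hasFDerivAt_apply_self hA x).mul (hasFDerivAt_apply_self hB x)
  refine ((Real.hasDerivAt_sqrt hx.ne').comp_hasFDerivAt x hg).congr_fderiv ?_
  have hs : 0 < √(A x x * B x x) := Real.sqrt_pos.2 hx
  ext u
  simp only [FunLike.coe_smul, Pi.smul_apply, add_apply, smul_eq_mul]
  field_simp

theorem fderiv_fderiv_sqrt_mul_apply_self (hA : ∀ u w, A u w = A w u)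
    (hB : ∀ u w, B u w = B w u) {z : E} (hz : 0 < A z z * B z z) (u w : E) :
    fderiv ℝ (fderiv ℝ fun y => √(A y y * B y y)) z u w =
      (A z z * B u w + B z z * A u w -
        (A z z * B z u - B z z * A z u) * (A z z * B z w - B z z * A z w) / (A z z * B z z)) /
        √(A z z * B z z) := by
  have hg (y : E) := (hasFDerivAt_apply_self hA y).mul (hasFDerivAt_apply_self hB y)
  have hfd : fderiv ℝ (fun y => √(A y y * B y y)) =ᶠ[nhds z]
      fun y => (√(A y y * B y y))⁻¹ • (A y y • B y + B y y • A y) := by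
    filter_upwards [(hg z).continuousAt.eventually (lt_mem_nhds hz)] with y hy
    exact (hasFDerivAt_sqrt_mul_apply_self hA hB hy).fderiv
  have hs : 0 < √(A z z * B z z) := Real.sqrt_pos.2 hz
  have hinv : HasDerivAt (fun t => (√t)⁻¹) _ (A z z * B z z) :=
    (Real.hasDerivAt_sqrt hz.ne').inv hs.ne'
  have hc : HasFDerivAt (fun y => (√(A y y * B y y))⁻¹) _ z :=
    hinv.comp_hasFDerivAt (f := fun y => A y y * B y y) z (hg z)
  have hD := hc.smul (((hasFDerivAt_apply_self hA z).smul B.hasFDerivAt).add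
    ((hasFDerivAt_apply_self hB z).smul A.hasFDerivAt))
  rw [hfd.fderiv_eq.trans hD.fderiv]
  have hα : A z z ≠ 0 := left_ne_zero_of_mul hz.ne'
  have hβ : B z z ≠ 0 := right_ne_zero_of_mul hz.ne'
  simp only [smul_add, one_div, mul_inv_rev, Pi.add_apply, Pi.smul_apply', add_apply, smul_apply,
    ContinuousLinearMap.smulRight_apply, smul_eq_mul]
  field_simp
  rw [Real.sq_sqrt hz.le]
  ring

end SqrtOfProductOfQuadraticForms

section LeviForm

variable {F : Type*} [NormedAddCommGroup F] [InnerProductSpace ℝ F] {A B : F →L[ℝ] F →L[ℝ] ℝ}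

theorem levi_sqrt_mul_apply_self (hA : ∀ u w, A u w = A w u) (hB : ∀ u w, B u w = B w u)
    {J : F → F} (hJJ : ∀ u, J (J u) = -u) (hJ : ∀ u w, ⟪J u, J w⟫ = ⟪u, w⟫)
    (hAJ : ∀ u w, A u w + A (J u) (J w) = ⟪u, w⟫) (hBJ : ∀ u w, B u w + B (J u) (J w) = ⟪u, w⟫)
    {z v : F} (hz : 0 < A z z * B z z) (hv : ∀ u, A z z * B z u - B z z * A z u = ⟪J v, u⟫)
    (w : F) :
    fderiv ℝ (fderiv ℝ fun y => √(A y y * B y y)) z v w +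
        fderiv ℝ (fderiv ℝ fun y => √(A y y * B y y)) z (J v) (J w) =
      (A z z + B z z - ‖v‖ ^ 2 / (A z z * B z z)) / √(A z z * B z z) * ⟪v, w⟫ := by
  have hJv : ⟪J v, v⟫ = 0 := by
    have h := hJ (J v) v
    rw [hJJ, inner_neg_left, real_inner_comm] at h
    linarith
  rw [fderiv_fderiv_sqrt_mul_apply_self hA hB hz, fderiv_fderiv_sqrt_mul_apply_self hA hB hz,
    hv, hv, hv, hv, hJv, hJ v w, hJ, real_inner_self_eq_norm_sq]
  have hα : A z z ≠ 0 := left_ne_zero_of_mul hz.ne'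
  have hβ : B z z ≠ 0 := right_ne_zero_of_mul hz.ne'
  field_simp
  linear_combination (A z z * B z z) * (A z z * hBJ v w + B z z * hAJ v w)

end LeviForm

section SumOfSquares

variable {E : Type*} [NormedAddCommGroup E] [NormedSpace ℝ E] {ι : Type*} [Fintype ι]

def sumSqForm (ℓ : ι → E →L[ℝ] ℝ) : E →L[ℝ] E →L[ℝ] ℝ :=
  ∑ i, (ℓ i).smulRight (ℓ i)

@[simp]
theorem sumSqForm_apply (ℓ : ι → E →L[ℝ] ℝ) (u w : E) :
    sumSqForm ℓ u w = ∑ i, ℓ i u * ℓ i w := by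
  simp [sumSqForm]

theorem sumSqForm_comm (ℓ : ι → E →L[ℝ] ℝ) (u w : E) : sumSqForm ℓ u w = sumSqForm ℓ w u := by
  simp only [sumSqForm_apply, mul_comm]

theorem sumSqForm_self_nonneg (ℓ : ι → E →L[ℝ] ℝ) (u : E) : 0 ≤ sumSqForm ℓ u u := by
  simpa only [sumSqForm_apply] using Finset.sum_nonneg fun i _ => mul_self_nonneg (ℓ i u)

end SumOfSquares

section Coordinates

variable {n : ℕ}

def reCoord (n : ℕ) (i : Fin n) : Cn n →L[ℝ] ℝ :=
  Complex.reCLM.comp ((EuclideanSpace.proj i).restrictScalars ℝ)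

def imCoord (n : ℕ) (i : Fin n) : Cn n →L[ℝ] ℝ :=
  Complex.imCLM.comp ((EuclideanSpace.proj i).restrictScalars ℝ)

@[simp]
theorem reCoord_apply (i : Fin n) (u : Cn n) : reCoord n i u = (u i).re := rfl

@[simp]
theorem imCoord_apply (i : Fin n) (u : Cn n) : imCoord n i u = (u i).im := rfl

theorem real_inner_eq_sum (u w : Cn n) :
    ⟪u, w⟫ = ∑ i, ((u i).re * (w i).re + (u i).im * (w i).im) := by
  simp only [PiLp.inner_apply, Complex.inner, Complex.mul_re, Complex.conj_re, Complex.conj_im]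
  exact Finset.sum_congr rfl fun i _ => by ring

theorem I_smul_apply_re (u : Cn n) (i : Fin n) : ((Complex.I • u) i).re = -(u i).im := by
  simp

theorem I_smul_apply_im (u : Cn n) (i : Fin n) : ((Complex.I • u) i).im = (u i).re := by
  simp

theorem real_inner_I_smul_I_smul (u w : Cn n) : ⟪Complex.I • u, Complex.I • w⟫ = ⟪u, w⟫ := by
  simp only [real_inner_eq_sum, I_smul_apply_re, I_smul_apply_im]
  exact Finset.sum_congr rfl fun i _ => by ring

theorem sumSqForm_add_sumSqForm_I_smul {ℓ : Fin n → Cn n →L[ℝ] ℝ}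
    (hℓ : ∀ i, ℓ i = reCoord n i ∨ ℓ i = imCoord n i) (u w : Cn n) :
    sumSqForm ℓ u w + sumSqForm ℓ (Complex.I • u) (Complex.I • w) = ⟪u, w⟫ := by
  rw [real_inner_eq_sum, sumSqForm_apply, sumSqForm_apply, ← Finset.sum_add_distrib]
  refine Finset.sum_congr rfl fun i _ => ?_
  rcases hℓ i with h | h <;>
    simp only [h, reCoord_apply, imCoord_apply, I_smul_apply_re, I_smul_apply_im] <;> ring

end Coordinates

section AlphaBeta

variable {n : ℕ}

def alphForm (n : ℕ) : Cn n →L[ℝ] Cn n →L[ℝ] ℝ := sumSqForm (reCoord n)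

def betCoord (n k : ℕ) (i : Fin n) : Cn n →L[ℝ] ℝ :=
  if (i : ℕ) < k then reCoord n i else imCoord n i

def betForm (n k : ℕ) : Cn n →L[ℝ] Cn n →L[ℝ] ℝ := sumSqForm (betCoord n k)

theorem alph_eq_alphForm (q : Cn n) : alph n q = alphForm n q q := by
  simp [alph, alphForm, sq]

theorem bet_eq_betForm (k : ℕ) (q : Cn n) : bet n k q = betForm n k q q := by
  simp only [bet, betForm, sumSqForm_apply, betCoord]
  exact Finset.sum_congr rfl fun i _ => by split_ifs <;> simp [sq]

theorem alph_nonneg (q : Cn n) : 0 ≤ alph n q :=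
  alph_eq_alphForm q ▸ sumSqForm_self_nonneg _ q

theorem bet_nonneg (k : ℕ) (q : Cn n) : 0 ≤ bet n k q :=
  bet_eq_betForm k q ▸ sumSqForm_self_nonneg _ q

theorem alphForm_add_alphForm_I_smul (u w : Cn n) :
    alphForm n u w + alphForm n (Complex.I • u) (Complex.I • w) = ⟪u, w⟫ :=
  sumSqForm_add_sumSqForm_I_smul (fun _ => .inl rfl) u w

theorem betForm_add_betForm_I_smul (k : ℕ) (u w : Cn n) :
    betForm n k u w + betForm n k (Complex.I • u) (Complex.I • w) = ⟪u, w⟫ :=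
  sumSqForm_add_sumSqForm_I_smul (fun i => by unfold betCoord; split_ifs <;> simp) u w

theorem v0_apply_re (k : ℕ) (z : Cn n) (i : Fin n) :
    (v0 n k z i).re = if (i : ℕ) < k then 0 else alph n z * (z i).im := by
  by_cases hi : (i : ℕ) < k
  · simp [v0, hi, not_le.2 hi]
  · simp [v0, hi, not_lt.1 hi]

theorem v0_apply_im (k : ℕ) (z : Cn n) (i : Fin n) :
    (v0 n k z i).im = (bet n k z - if (i : ℕ) < k then alph n z else 0) * (z i).re := by
  simp [v0]

theorem alph_mul_betForm_sub_bet_mul_alphForm (k : ℕ) (z u : Cn n) :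
    alph n z * betForm n k z u - bet n k z * alphForm n z u = ⟪Complex.I • v0 n k z, u⟫ := by
  simp only [betForm, alphForm, sumSqForm_apply, real_inner_eq_sum, I_smul_apply_re,
    I_smul_apply_im, v0_apply_re, v0_apply_im, Finset.mul_sum, ← Finset.sum_sub_distrib]
  refine Finset.sum_congr rfl fun i _ => ?_
  by_cases hi : (i : ℕ) < k <;>
    simp only [betCoord, hi, ↓reduceIte, reCoord_apply, imCoord_apply] <;> ring

theorem norm_v0_sq (k : ℕ) (z : Cn n) :
    ‖v0 n k z‖ ^ 2 = alph n z * bet n k z * (alph n z + bet n k z - 2 * sxk n k z) := by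
  set S := sxk n k z
  set X := ∑ i : Fin n, if (i : ℕ) < k then 0 else (z i).re ^ 2
  set Y := ∑ i : Fin n, if (i : ℕ) < k then 0 else (z i).im ^ 2
  have hα : alph n z = S + X := by
    simp only [alph, S, X, sxk, ← Finset.sum_add_distrib]
    exact Finset.sum_congr rfl fun i _ => by split_ifs <;> ring
  have hβ : bet n k z = S + Y := by
    simp only [bet, S, Y, sxk, ← Finset.sum_add_distrib]
    exact Finset.sum_congr rfl fun i _ => by split_ifs <;> ring
  have hv : ‖v0 n k z‖ ^ 2 =
      alph n z ^ 2 * Y + (bet n k z - alph n z) ^ 2 * S + bet n k z ^ 2 * X := by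
    rw [← real_inner_self_eq_norm_sq, real_inner_eq_sum]
    simp only [v0_apply_re, v0_apply_im, S, X, Y, sxk, Finset.mul_sum, ← Finset.sum_add_distrib]
    exact Finset.sum_congr rfl fun i _ => by split_ifs <;> ring
  rw [hv, hα, hβ]
  ring

end AlphaBeta

theorem v0_eigenvector_general (n k : ℕ) (z : Cn n)
    (h1 : alph n z ≠ 0) (h2 : bet n k z ≠ 0) (w : Cn n) :
    leviB n (fun q => Real.sqrt (alph n q * bet n k q)) z (v0 n k z) w =
      (2 * sxk n k z / Real.sqrt (alph n z * bet n k z)) * (inner ℝ (v0 n k z) w : ℝ) := by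
  have hα : 0 < alph n z := (alph_nonneg z).lt_of_ne' h1
  have hβ : 0 < bet n k z := (bet_nonneg k z).lt_of_ne' h2
  have hlevi := levi_sqrt_mul_apply_self (A := alphForm n) (B := betForm n k)
    (sumSqForm_comm _) (sumSqForm_comm _)
    (J := (Complex.I • ·)) (fun u => by simp [smul_smul]) real_inner_I_smul_I_smul
    alphForm_add_alphForm_I_smul (betForm_add_betForm_I_smul k)
    (z := z) (v := v0 n k z) (by rw [← alph_eq_alphForm, ← bet_eq_betForm]; positivity)
    (by simpa only [← alph_eq_alphForm, ← bet_eq_betForm] using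
      alph_mul_betForm_sub_bet_mul_alphForm k z) w
  simp only [← alph_eq_alphForm, ← bet_eq_betForm] at hlevi
  rw [leviB, iteratedFDeriv_two_apply, iteratedFDeriv_two_apply]
  simp only [Matrix.cons_val_zero, Matrix.cons_val_one]
  rw [hlevi, norm_v0_sq]
  field_simp
  ring

/-- outside L₁ ∪ L₂, v₀ is an eigenvector of the matrix M₀ of
dd^c √(αβ)(·, i·) with eigenvalue (2Σ_{i≤k} xᵢ²)/√(αβ). -/
theorem v0_eigenvector (n k : ℕ) (hk : k ≤ n) (z : Cn n)
    (h1 : alph n z ≠ 0) (h2 : bet n k z ≠ 0) (w : Cn n) :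
    leviB n (fun q => Real.sqrt (alph n q * bet n k q)) z (v0 n k z) w =
      (2 * sxk n k z / Real.sqrt (alph n z * bet n k z)) * (inner ℝ (v0 n k z) w : ℝ) :=
  v0_eigenvector_general n k z h1 h2 w
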